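/- Let φ be the standard normal density and Φ the standard normal cdf. For every z < 0 and ν > 0 with z < −ν/2, one has φ(z+ν) − φ(z−ν) + z·(Φ(z+ν) − Φ(z−ν)) ≤ 0. -/

import Mathlib

open MeasureTheory Real

/-- The standard normal density φ(u) = exp(-u²/2)/√(2π). -/
noncomputable def stdNormalPdf (u : ℝ) : ℝ := Real.exp (-u ^ 2 / 2) / Real.sqrt (2 * Real.pi)

/-- The standard normal cdf Φ(z) = ∫_{-∞}^z φ(u) du. -/
noncomputable def stdNormalCdf (z : ℝ) : ℝ := ∫ u in Set.Iic z, stdNormalPdf u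

/-!
For fixed `z`, the quantity `g ν = φ(z+ν) − φ(z−ν) + z·(Φ(z+ν) − Φ(z−ν))` vanishes at `ν = 0`,
and since `φ' u = -u φ u` its derivative is `g' ν = ν·(φ(z−ν) − φ(z+ν))`. For `z ≤ 0` and
`ν ≥ 0` the point `z − ν` is farther from the origin than `z + ν`, so `g' ≤ 0` and `g` stays
nonpositive on `[0, ∞)`.
-/

-- `B + z·D` in the notation of the paper.
noncomputable def strangleGap (z ν : ℝ) : ℝ :=
  stdNormalPdf (z + ν) - stdNormalPdf (z - ν) + z * (stdNormalCdf (z + ν) - stdNormalCdf (z - ν))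

lemma continuous_stdNormalPdf : Continuous stdNormalPdf := by
  unfold stdNormalPdf
  fun_prop

lemma integrable_stdNormalPdf : Integrable stdNormalPdf := by
  have h : stdNormalPdf = fun u => rexp (-(1 / 2) * u ^ 2) / √(2 * π) := by
    funext u
    unfold stdNormalPdf
    ring_nf
  rw [h]
  exact (integrable_exp_neg_mul_sq (by norm_num)).div_const _

lemma hasDerivAt_stdNormalPdf (u : ℝ) : HasDerivAt stdNormalPdf (-u * stdNormalPdf u) u :=
  ((((hasDerivAt_id u).fun_pow 2).fun_neg.div_const 2).exp.div_const √(2 * π)).congr_deriv <| by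
    simp only [stdNormalPdf, id]
    ring

lemma stdNormalCdf_sub_stdNormalCdf (a b : ℝ) :
    stdNormalCdf b - stdNormalCdf a = ∫ u in a..b, stdNormalPdf u :=
  intervalIntegral.integral_Iic_sub_Iic integrable_stdNormalPdf.integrableOn
    integrable_stdNormalPdf.integrableOn

lemma hasDerivAt_stdNormalCdf (x : ℝ) : HasDerivAt stdNormalCdf (stdNormalPdf x) x := by
  have h : stdNormalCdf = fun x => stdNormalCdf 0 + ∫ u in 0..x, stdNormalPdf u := by
    funext x
    rw [← stdNormalCdf_sub_stdNormalCdf]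
    ring
  rw [h]
  exact ((continuous_stdNormalPdf.integral_hasStrictDerivAt 0 x).hasDerivAt).const_add _

lemma stdNormalPdf_le_stdNormalPdf_of_sq_le {a b : ℝ} (h : b ^ 2 ≤ a ^ 2) :
    stdNormalPdf a ≤ stdNormalPdf b := by
  unfold stdNormalPdf
  gcongr

lemma hasDerivAt_strangleGap (z ν : ℝ) :
    HasDerivAt (strangleGap z) (ν * (stdNormalPdf (z - ν) - stdNormalPdf (z + ν))) ν := by
  have hplus := (hasDerivAt_id ν).const_add z
  have hminus := (hasDerivAt_id ν).const_sub z
  have h : HasDerivAt (strangleGap z) _ ν :=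
    (((hasDerivAt_stdNormalPdf _).comp ν hplus).sub
      ((hasDerivAt_stdNormalPdf _).comp ν hminus)).add
    ((((hasDerivAt_stdNormalCdf _).comp ν hplus).sub
      ((hasDerivAt_stdNormalCdf _).comp ν hminus)).const_mul z)
  refine h.congr_deriv ?_
  simp only [id]
  ring

lemma strangleGap_zero (z : ℝ) : strangleGap z 0 = 0 := by
  simp [strangleGap]

lemma antitoneOn_strangleGap {z : ℝ} (hz : z ≤ 0) : AntitoneOn (strangleGap z) (Set.Ici 0) := by
  refine antitoneOn_of_hasDerivWithinAt_nonpos (convex_Ici 0)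
    (fun ν _ => (hasDerivAt_strangleGap z ν).continuousAt.continuousWithinAt)
    (fun ν _ => (hasDerivAt_strangleGap z ν).hasDerivWithinAt) fun ν hν => ?_
  rw [interior_Ici, Set.mem_Ioi] at hν
  have hfar : stdNormalPdf (z - ν) ≤ stdNormalPdf (z + ν) :=
    stdNormalPdf_le_stdNormalPdf_of_sq_le (by nlinarith)
  exact mul_nonpos_of_nonneg_of_nonpos hν.le (sub_nonpos.mpr hfar)

theorem strangle_B_add_z_mul_D_nonpos_general (z ν : ℝ) (hz : z < 0) (hν : 0 < ν) :
    stdNormalPdf (z + ν) - stdNormalPdf (z - ν) +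
      z * (stdNormalCdf (z + ν) - stdNormalCdf (z - ν)) ≤ 0 := by
  have h := antitoneOn_strangleGap hz.le Set.self_mem_Ici (Set.mem_Ici.mpr hν.le) hν.le
  rwa [strangleGap_zero] at h

/-- Over the practical domain (z < 0, ν > 0, z < −ν/2), one has B + z·D ≤ 0, where
B = φ(z+ν) − φ(z−ν) and D = Φ(z+ν) − Φ(z−ν). -/
theorem strangle_B_add_z_mul_D_nonpos (z ν : ℝ) (hz : z < 0) (hν : 0 < ν)
    (hB : z < -ν / 2) :
    stdNormalPdf (z + ν) - stdNormalPdf (z - ν) +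
      z * (stdNormalCdf (z + ν) - stdNormalCdf (z - ν)) ≤ 0 :=
  strangle_B_add_z_mul_D_nonpos_general z ν hz hν
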